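/- Uniqueness of the very weak solution: for every M ∈ ℕ there exists C_M > 0 such that sup_{t∈[0,T]} ‖u_ε(t) − ũ_ε(t)‖_{L²(0,1)} ≤ C_M ε^M for all ε ∈ (0,1]. -/

import Mathlib

open MeasureTheory Set
open scoped RealInnerProductSpace ENNReal NNReal

set_option maxHeartbeats 1000000

noncomputable section

/-- The measure on the interval `(0,1)`. -/
abbrev mu01 : MeasureTheory.Measure ℝ := MeasureTheory.volume.restrict (Set.Ioo (0:ℝ) 1)

/-- The real Hilbert space `L²(0,1)`. -/
abbrev L2 := MeasureTheory.Lp ℝ 2 mu01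

/-- `φ ∈ L²(0,1)` is a Dirichlet eigenfunction of `−d²/dx² + q` with eigenvalue `lam`:
it has a representative `Φ` which together with its derivative `Φd` is absolutely
continuous on `[0,1]` (encoded via the integral representations with integrable
derivatives), has second derivative `Φdd ∈ L²(0,1)`, satisfies `Φ(0) = Φ(1) = 0`, and
solves `−Φ″ + qΦ = lam Φ` a.e. on `(0,1)`. -/
def IsDirichletEigenfunction (q : ℝ → ℝ) (lam : ℝ) (φ : L2) : Prop :=
  ∃ Φ Φd Φdd : ℝ → ℝ,
    (∀ᵐ x ∂mu01, (φ : ℝ → ℝ) x = Φ x) ∧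
    IntervalIntegrable Φd volume 0 1 ∧
    IntervalIntegrable Φdd volume 0 1 ∧
    (∀ x ∈ Icc (0:ℝ) 1, Φ x = Φ 0 + ∫ s in (0:ℝ)..x, Φd s) ∧
    (∀ x ∈ Icc (0:ℝ) 1, Φd x = Φd 0 + ∫ s in (0:ℝ)..x, Φdd s) ∧
    MemLp Φdd 2 mu01 ∧
    Φ 0 = 0 ∧ Φ 1 = 0 ∧
    (∀ᵐ x ∂mu01, -Φdd x + q x * Φ x = lam * Φ x)

/-- `w ∈ L²(0,1)` has a representative `V` which together with its derivative `Vd` is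
absolutely continuous on `[0,1]`, with second derivative `Vdd ∈ L²(0,1)`, and
`V(0) = V(1) = 0`. -/
def IsH2DirichletWith (w : L2) (V Vd Vdd : ℝ → ℝ) : Prop :=
  (∀ᵐ x ∂mu01, (w : ℝ → ℝ) x = V x) ∧
  IntervalIntegrable Vd volume 0 1 ∧
  IntervalIntegrable Vdd volume 0 1 ∧
  (∀ x ∈ Icc (0:ℝ) 1, V x = V 0 + ∫ s in (0:ℝ)..x, Vd s) ∧
  (∀ x ∈ Icc (0:ℝ) 1, Vd x = Vd 0 + ∫ s in (0:ℝ)..x, Vdd s) ∧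
  MemLp Vdd 2 mu01 ∧
  V 0 = 0 ∧ V 1 = 0


/-- elementary: `|e^{-x} - e^{-y}| ≤ e^{-min x y} |x - y|`. -/
lemma exp_neg_sub_le {x y : ℝ} :
    |Real.exp (-x) - Real.exp (-y)| ≤ Real.exp (-min x y) * |x - y| := by
  wlog h : x ≤ y generalizing x y
  · rw [abs_sub_comm, min_comm, abs_sub_comm x y]; exact this (le_of_not_ge h)
  rw [min_eq_left h]
  have h1 : Real.exp (-y) ≤ Real.exp (-x) := Real.exp_le_exp.2 (by linarith)
  rw [abs_of_nonneg (by linarith), abs_of_nonpos (by linarith)]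
  have : Real.exp (-y) = Real.exp (-x) * Real.exp (-(y - x)) := by
    rw [← Real.exp_add]; ring_nf
  rw [this]
  have h2 : 1 - (y - x) ≤ Real.exp (-(y - x)) := by
    have := Real.add_one_le_exp (-(y - x)); linarith
  nlinarith [Real.exp_pos (-x), Real.exp_pos (-(y - x))]

lemma mul_exp_neg_le_one {u : ℝ} (hu : 0 ≤ u) : u * Real.exp (-u) ≤ 1 := by
  have h1 : u + 1 ≤ Real.exp u := Real.add_one_le_exp u
  have h2 : Real.exp (-u) = (Real.exp u)⁻¹ := Real.exp_neg u
  rw [h2]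
  rw [mul_inv_le_iff₀ (Real.exp_pos u), one_mul]
  linarith

/-- main weight-difference bound. -/
lemma weight_diff_le {l t a0 η β βt : ℝ} (hl : 0 ≤ l) (ht : 0 ≤ t) (ha0 : 0 < a0)
    (hη : 0 ≤ η) (hβ : a0 * t ≤ β) (hβt : a0 * t ≤ βt) (hd : |β - βt| ≤ t * η) :
    |Real.exp (-(l * β)) - Real.exp (-(l * βt))| ≤ η / a0 := by
  have hmin : l * (a0 * t) ≤ min (l * β) (l * βt) :=
    le_min (by nlinarith) (by nlinarith)
  have h1 : |Real.exp (-(l * β)) - Real.exp (-(l * βt))| ≤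
      Real.exp (-(l * (a0 * t))) * |l * β - l * βt| := by
    refine (exp_neg_sub_le).trans ?_
    have := Real.exp_le_exp.2 (neg_le_neg hmin)
    exact mul_le_mul_of_nonneg_right this (abs_nonneg _)
  have h2 : |l * β - l * βt| = l * |β - βt| := by
    rw [← mul_sub, abs_mul, abs_of_nonneg hl]
  have h3 : Real.exp (-(l * (a0 * t))) * (l * |β - βt|) ≤
      Real.exp (-(l * (a0 * t))) * (l * (t * η)) := by
    have := mul_le_mul_of_nonneg_left hd hl
    exact mul_le_mul_of_nonneg_left this (Real.exp_pos _).le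
  have h4 : Real.exp (-(l * (a0 * t))) * (l * (t * η)) ≤ η / a0 := by
    have hkey : (l * (a0 * t)) * Real.exp (-(l * (a0 * t))) ≤ 1 :=
      mul_exp_neg_le_one (by positivity)
    rw [div_eq_mul_inv]
    have ha0' : (0:ℝ) < a0⁻¹ := by positivity
    -- e^{-u} * (l*t*η) = (u * e^{-u}) * (η / a0) with u = l*a0*t
    have : Real.exp (-(l * (a0 * t))) * (l * (t * η)) =
        ((l * (a0 * t)) * Real.exp (-(l * (a0 * t)))) * (η * a0⁻¹) := by
      field_simp
    rw [this]
    calc ((l * (a0 * t)) * Real.exp (-(l * (a0 * t)))) * (η * a0⁻¹)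
        ≤ 1 * (η * a0⁻¹) := mul_le_mul_of_nonneg_right hkey (by positivity)
      _ = η * a0⁻¹ := one_mul _
  calc |Real.exp (-(l * β)) - Real.exp (-(l * βt))|
      ≤ Real.exp (-(l * (a0 * t))) * |l * β - l * βt| := h1
    _ = Real.exp (-(l * (a0 * t))) * (l * |β - βt|) := by rw [h2]
    _ ≤ Real.exp (-(l * (a0 * t))) * (l * (t * η)) := h3
    _ ≤ η / a0 := h4

/-- scalar Duhamel identity. -/
lemma exp_neg_sub_eq_integral (a b β : ℝ) :
    Real.exp (-(β * a)) - Real.exp (-(β * b)) =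
      ∫ s in (0:ℝ)..β, (b - a) * Real.exp (s * (b - a) - β * b) := by
  have hd : ∀ s ∈ uIcc (0:ℝ) β,
      HasDerivAt (fun s => Real.exp (s * (b - a) - β * b))
        ((b - a) * Real.exp (s * (b - a) - β * b)) s := by
    intro s _
    have h1 : HasDerivAt (fun s : ℝ => s * (b - a) - β * b) (b - a) s :=
      (hasDerivAt_mul_const (b - a)).sub_const (β * b)
    simpa [mul_comm] using h1.exp
  have hint : IntervalIntegrable
      (fun s => (b - a) * Real.exp (s * (b - a) - β * b)) volume 0 β :=
    (Continuous.mul continuous_const (Real.continuous_exp.comp (by continuity))).intervalIntegrable 0 β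
  have := intervalIntegral.integral_eq_sub_of_hasDerivAt hd hint
  rw [this]
  ring_nf


section Bform

/-- Pointwise multiplication of two L² functions is integrable. -/
lemma memL2_mul_integrable {f g : ℝ → ℝ} (hf : MemLp f 2 mu01) (hg : MemLp g 2 mu01) :
    Integrable (fun x => f x * g x) mu01 := by
  have h1 : Integrable (fun x => f x ^ 2) mu01 := hf.integrable_sq
  have h2 : Integrable (fun x => g x ^ 2) mu01 := hg.integrable_sq
  have hb : Integrable (fun x => (1/2 : ℝ) * (f x ^ 2 + g x ^ 2)) mu01 := (h1.add h2).const_mul _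
  refine Integrable.mono' hb
    (hf.aestronglyMeasurable.mul hg.aestronglyMeasurable) ?_
  filter_upwards with x
  rw [Real.norm_eq_abs, abs_mul]
  nlinarith [sq_nonneg (|f x| - |g x|), abs_nonneg (f x), abs_nonneg (g x),
    sq_abs (f x), sq_abs (g x)]

/-- a.e. bound from `MemLp _ ⊤`. -/
lemma ae_bound_of_memtop {g : ℝ → ℝ} {μ : Measure ℝ} (hg : MemLp g ⊤ μ) :
    ∀ᵐ x ∂μ, |g x| ≤ (eLpNorm g ⊤ μ).toReal := by
  have h := MeasureTheory.ae_le_eLpNormEssSup (f := g) (μ := μ)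
  have hfin : eLpNormEssSup g μ < ⊤ := by
    have := hg.eLpNorm_lt_top
    rwa [eLpNorm_exponent_top] at this
  filter_upwards [h] with x hx
  have h2 : ((‖g x‖₊ : ℝ≥0∞)).toReal ≤ (eLpNormEssSup g μ).toReal :=
    ENNReal.toReal_mono hfin.ne hx
  simpa [eLpNorm_exponent_top, Real.norm_eq_abs] using h2

/-- The bilinear form `∫ g·u·v`. -/
def Bform (g : ℝ → ℝ) (u v : L2) : ℝ :=
  ∫ x, g x * ((u : ℝ → ℝ) x * (v : ℝ → ℝ) x) ∂mu01

lemma L2_mul_integrable (u v : L2) :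
    Integrable (fun x => (u : ℝ → ℝ) x * (v : ℝ → ℝ) x) mu01 :=
  memL2_mul_integrable (Lp.memLp u) (Lp.memLp v)

lemma Bform_integrable {g : ℝ → ℝ} (hg : MemLp g ⊤ mu01) (u v : L2) :
    Integrable (fun x => g x * ((u : ℝ → ℝ) x * (v : ℝ → ℝ) x)) mu01 := by
  refine (L2_mul_integrable u v).bdd_mul (c := (eLpNorm g ⊤ mu01).toReal) hg.aestronglyMeasurable ?_
  filter_upwards [ae_bound_of_memtop hg] with x hx
  simpa [Real.norm_eq_abs] using hx

/-- Cauchy-Schwarz-type bound for `Bform`. -/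
lemma Bform_abs_le {g : ℝ → ℝ} (hg : MemLp g ⊤ mu01) (u v : L2) :
    |Bform g u v| ≤ (eLpNorm g ⊤ mu01).toReal * (‖u‖ * ‖v‖) := by
  set δ := (eLpNorm g ⊤ mu01).toReal with hδ
  have hδ0 : 0 ≤ δ := ENNReal.toReal_nonneg
  have h1 : |Bform g u v| ≤ ∫ x, |g x * ((u : ℝ → ℝ) x * (v : ℝ → ℝ) x)| ∂mu01 := by
    have := norm_integral_le_integral_norm (μ := mu01)
      (f := fun x => g x * ((u : ℝ → ℝ) x * (v : ℝ → ℝ) x))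
    simpa only [Real.norm_eq_abs, Bform] using this
  have h2 : ∫ x, |g x * ((u : ℝ → ℝ) x * (v : ℝ → ℝ) x)| ∂mu01 ≤
      ∫ x, δ * |(u : ℝ → ℝ) x * (v : ℝ → ℝ) x| ∂mu01 := by
    refine integral_mono_ae (Bform_integrable hg u v).abs
      ((L2_mul_integrable u v).abs.const_mul δ) ?_
    filter_upwards [ae_bound_of_memtop hg] with x hx
    rw [abs_mul]
    exact mul_le_mul_of_nonneg_right hx (abs_nonneg _)
  have h3 : ∫ x, |(u : ℝ → ℝ) x * (v : ℝ → ℝ) x| ∂mu01 ≤ ‖u‖ * ‖v‖ := by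
    have habs : ∫ x, |(u : ℝ → ℝ) x * (v : ℝ → ℝ) x| ∂mu01 = ⟪|u|, |v|⟫ := by
      rw [MeasureTheory.L2.inner_def]
      refine integral_congr_ae ?_
      filter_upwards [Lp.coeFn_abs u, Lp.coeFn_abs v] with x h1 h2
      rw [h1, h2]
      simp [abs_mul, RCLike.inner_apply, mul_comm]
    rw [habs]
    calc ⟪|u|, |v|⟫ ≤ ‖(|u| : L2)‖ * ‖(|v| : L2)‖ := real_inner_le_norm _ _
      _ = ‖u‖ * ‖v‖ := by rw [norm_abs_eq_norm, norm_abs_eq_norm]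
  calc |Bform g u v| ≤ ∫ x, δ * |(u : ℝ → ℝ) x * (v : ℝ → ℝ) x| ∂mu01 := h1.trans h2
    _ = δ * ∫ x, |(u : ℝ → ℝ) x * (v : ℝ → ℝ) x| ∂mu01 := integral_const_mul δ _
    _ ≤ δ * (‖u‖ * ‖v‖) := mul_le_mul_of_nonneg_left h3 hδ0

lemma Bform_add_left {g : ℝ → ℝ} (hg : MemLp g ⊤ mu01) (u u' v : L2) :
    Bform g (u + u') v = Bform g u v + Bform g u' v := by
  rw [Bform, Bform, Bform, ← integral_add (Bform_integrable hg u v) (Bform_integrable hg u' v)]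
  refine integral_congr_ae ?_
  filter_upwards [Lp.coeFn_add u u'] with x hx
  rw [hx]; simp; ring

lemma Bform_smul_left {g : ℝ → ℝ} (a : ℝ) (u v : L2) :
    Bform g (a • u) v = a * Bform g u v := by
  rw [Bform, Bform, ← integral_const_mul]
  refine integral_congr_ae ?_
  filter_upwards [Lp.coeFn_smul a u] with x hx
  rw [hx]; simp; ring

lemma Bform_add_right {g : ℝ → ℝ} (hg : MemLp g ⊤ mu01) (u v v' : L2) :
    Bform g u (v + v') = Bform g u v + Bform g u v' := by
  rw [Bform, Bform, Bform, ← integral_add (Bform_integrable hg u v) (Bform_integrable hg u v')]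
  refine integral_congr_ae ?_
  filter_upwards [Lp.coeFn_add v v'] with x hx
  rw [hx]; simp; ring

lemma Bform_smul_right {g : ℝ → ℝ} (a : ℝ) (u v : L2) :
    Bform g u (a • v) = a * Bform g u v := by
  rw [Bform, Bform, ← integral_const_mul]
  refine integral_congr_ae ?_
  filter_upwards [Lp.coeFn_smul a v] with x hx
  rw [hx]; simp; ring

lemma Bform_zero_left {g : ℝ → ℝ} (v : L2) : Bform g 0 v = 0 := by
  have h0 : ((0:ℝ) • (0 : L2)) = (0 : L2) := by simp
  rw [← h0, Bform_smul_left]; ring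

lemma Bform_zero_right {g : ℝ → ℝ} (u : L2) : Bform g u 0 = 0 := by
  have h0 : ((0:ℝ) • (0 : L2)) = (0 : L2) := by simp
  rw [← h0, Bform_smul_right]; ring

lemma Bform_sum_left {g : ℝ → ℝ} (hg : MemLp g ⊤ mu01) (P : Finset ℕ) (f : ℕ → L2) (v : L2) :
    Bform g (∑ n ∈ P, f n) v = ∑ n ∈ P, Bform g (f n) v := by
  classical
  induction P using Finset.induction_on with
  | empty => simp [Bform_zero_left]
  | insert _ _ hn ih =>
      rw [Finset.sum_insert hn, Bform_add_left hg, ih, Finset.sum_insert hn]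

lemma Bform_sum_right {g : ℝ → ℝ} (hg : MemLp g ⊤ mu01) (Q : Finset ℕ) (u : L2) (h : ℕ → L2) :
    Bform g u (∑ m ∈ Q, h m) = ∑ m ∈ Q, Bform g u (h m) := by
  classical
  induction Q using Finset.induction_on with
  | empty => simp [Bform_zero_right]
  | insert _ _ hn ih =>
      rw [Finset.sum_insert hn, Bform_add_right hg, ih, Finset.sum_insert hn]

end Bform


lemma bddOn_mul_integrableOn {f g : ℝ → ℝ} {s : Set ℝ} (hs : MeasurableSet s)
    (hg : IntegrableOn g s volume) (hf : AEStronglyMeasurable f (volume.restrict s))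
    {C : ℝ} (hC : ∀ x ∈ s, |f x| ≤ C) :
    IntegrableOn (fun x => g x * f x) s volume := by
  have hb : ∀ᵐ x ∂(volume.restrict s), ‖f x‖ ≤ C := by
    rw [ae_restrict_iff' hs]
    exact ae_of_all _ fun x hx => by simpa [Real.norm_eq_abs] using hC x hx
  have := Integrable.bdd_mul (c := C) hg hf hb
  exact this.congr (ae_of_all _ fun x => mul_comm _ _)

lemma ibp_core {Φd Φdd Ψd Ψ : ℝ → ℝ}
    (hΦdd_int : IntervalIntegrable Φdd volume 0 1)
    (hΨd_int : IntervalIntegrable Ψd volume 0 1)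
    (hΦd : ∀ x ∈ Icc (0:ℝ) 1, Φd x = Φd 0 + ∫ s in (0:ℝ)..x, Φdd s)
    (hΨ : ∀ x ∈ Icc (0:ℝ) 1, Ψ x = ∫ s in (0:ℝ)..x, Ψd s)
    (hΨ1 : Ψ 1 = 0) :
    ∫ x in Ioc (0:ℝ) 1, Φdd x * Ψ x = - ∫ x in Ioc (0:ℝ) 1, Φd x * Ψd x := by
  set μ := volume.restrict (Ioc (0:ℝ) 1) with hμ
  have h01 : (0:ℝ) ≤ 1 := by norm_num
  have hΦdd_on : IntegrableOn Φdd (Ioc (0:ℝ) 1) volume :=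
    (intervalIntegrable_iff_integrableOn_Ioc_of_le h01).mp hΦdd_int
  have hΨd_on : IntegrableOn Ψd (Ioc (0:ℝ) 1) volume :=
    (intervalIntegrable_iff_integrableOn_Ioc_of_le h01).mp hΨd_int
  -- continuity of Ψ and Φd on Icc 0 1
  have hΨd_Icc : IntegrableOn Ψd (Icc (0:ℝ) 1) volume := by
    rwa [integrableOn_Icc_iff_integrableOn_Ioc]
  have hΦdd_Icc : IntegrableOn Φdd (Icc (0:ℝ) 1) volume := by
    rwa [integrableOn_Icc_iff_integrableOn_Ioc]
  have hΨc : ContinuousOn Ψ (Icc (0:ℝ) 1) := by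
    have hprim : ContinuousOn (fun x => ∫ s in (0:ℝ)..x, Ψd s) (Icc (0:ℝ) 1) := by
      have := intervalIntegral.continuousOn_primitive_interval
        (a := (0:ℝ)) (b := 1) (μ := volume) (f := Ψd) (by simpa using hΨd_Icc)
      simpa using this
    exact ContinuousOn.congr hprim hΨ
  have hΦdc : ContinuousOn Φd (Icc (0:ℝ) 1) := by
    have hprim : ContinuousOn (fun x => Φd 0 + ∫ s in (0:ℝ)..x, Φdd s) (Icc (0:ℝ) 1) := by
      have := intervalIntegral.continuousOn_primitive_interval
        (a := (0:ℝ)) (b := 1) (μ := volume) (f := Φdd) (by simpa using hΦdd_Icc)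
      exact continuousOn_const.add (by simpa using this)
    exact ContinuousOn.congr hprim hΦd
  obtain ⟨Cψ, hCψ⟩ := isCompact_Icc.exists_bound_of_continuousOn hΨc
  obtain ⟨Cφ, hCφ⟩ := isCompact_Icc.exists_bound_of_continuousOn hΦdc
  have hΨae : AEStronglyMeasurable Ψ μ :=
    (hΨc.mono Ioc_subset_Icc_self).aestronglyMeasurable measurableSet_Ioc
  have hΦdae : AEStronglyMeasurable Φd μ :=
    (hΦdc.mono Ioc_subset_Icc_self).aestronglyMeasurable measurableSet_Ioc
  have intΦddΨ : IntegrableOn (fun x => Φdd x * Ψ x) (Ioc (0:ℝ) 1) volume :=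
    bddOn_mul_integrableOn measurableSet_Ioc hΦdd_on hΨae
      (fun x hx => by simpa [Real.norm_eq_abs] using hCψ x (Ioc_subset_Icc_self hx))
  have intΨdΦd : IntegrableOn (fun x => Ψd x * Φd x) (Ioc (0:ℝ) 1) volume :=
    bddOn_mul_integrableOn measurableSet_Ioc hΨd_on hΦdae
      (fun x hx => by simpa [Real.norm_eq_abs] using hCφ x (Ioc_subset_Icc_self hx))
  -- Ψ as an integral against the restricted measure
  have key : ∀ x ∈ Ioc (0:ℝ) 1, Ψ x = ∫ s, (Iic x).indicator Ψd s ∂μ := by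
    intro x hx
    have h1 : Iic x ∩ Ioc (0:ℝ) 1 = Ioc 0 x := by
      ext s
      simp only [mem_inter_iff, mem_Iic, mem_Ioc]
      exact ⟨fun ⟨h_1, h_2, _⟩ => ⟨h_2, h_1⟩, fun ⟨h_1, h_2⟩ => ⟨h_2, h_1, h_2.trans hx.2⟩⟩
    rw [integral_indicator measurableSet_Iic, hμ, Measure.restrict_restrict measurableSet_Iic, h1,
      hΨ x (Ioc_subset_Icc_self hx), intervalIntegral.integral_of_le hx.1.le]
  -- the double-integral form
  have step1 : ∫ x, Φdd x * Ψ x ∂μ =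
      ∫ x, (∫ s, Φdd x * (Iic x).indicator Ψd s ∂μ) ∂μ := by
    refine setIntegral_congr_fun measurableSet_Ioc (fun x hx => ?_)
    rw [integral_const_mul, ← key x hx]
  -- Fubini
  have hF : Integrable (Function.uncurry fun x s => Φdd x * (Iic x).indicator Ψd s)
      (μ.prod μ) := by
    have heq : (Function.uncurry fun x s => Φdd x * (Iic x).indicator Ψd s) =
        Set.indicator {p : ℝ × ℝ | p.2 ≤ p.1} (fun p => Φdd p.1 * Ψd p.2) := by
      funext p
      by_cases h : p.2 ≤ p.1 <;>
        simp [Function.uncurry, Set.indicator_apply, mem_Iic, h]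
    rw [heq]
    exact (Integrable.mul_prod hΦdd_on hΨd_on).indicator
      (measurableSet_le measurable_snd measurable_fst)
  have step2 : ∫ x, (∫ s, Φdd x * (Iic x).indicator Ψd s ∂μ) ∂μ =
      ∫ s, (∫ x, Φdd x * (Iic x).indicator Ψd s ∂μ) ∂μ :=
    integral_integral_swap hF
  -- evaluate the inner integral
  have step3 : ∫ s, (∫ x, Φdd x * (Iic x).indicator Ψd s ∂μ) ∂μ =
      ∫ s, Ψd s * (Φd 1 - Φd s) ∂μ := by
    refine setIntegral_congr_fun measurableSet_Ioc (fun s hs => ?_)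
    have h2 : (fun x => Φdd x * (Iic x).indicator Ψd s) =
        (Ici s).indicator (fun x => Φdd x * Ψd s) := by
      funext x
      by_cases h : s ≤ x <;> simp [Set.indicator_apply, mem_Iic, mem_Ici, h]
    have h3 : Ici s ∩ Ioc (0:ℝ) 1 = Icc s 1 := by
      ext x
      simp only [mem_inter_iff, mem_Ici, mem_Ioc, mem_Icc]
      exact ⟨fun ⟨h_1, _, h_3⟩ => ⟨h_1, h_3⟩, fun ⟨h_1, h_2⟩ => ⟨h_1, lt_of_lt_of_le hs.1 h_1, h_2⟩⟩
    rw [h2, integral_indicator measurableSet_Ici, hμ,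
      Measure.restrict_restrict measurableSet_Ici, h3]
    have h4 : volume.restrict (Icc s 1) = volume.restrict (Ioc s 1) :=
      (Measure.restrict_congr_set Ioc_ae_eq_Icc).symm
    rw [h4, integral_mul_const]
    have h5 : ∫ x in Ioc s 1, Φdd x ∂volume = Φd 1 - Φd s := by
      rw [← intervalIntegral.integral_of_le hs.2]
      rw [hΦd 1 (by norm_num), hΦd s (Ioc_subset_Icc_self hs)]
      rw [← intervalIntegral.integral_interval_sub_left
        (hΦdd_int) (hΦdd_int.mono_set (by rw [uIcc_of_le hs.1.le, uIcc_of_le h01]; exact Icc_subset_Icc le_rfl hs.2))]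
      ring
    rw [h5]; ring
  -- final computation
  have hΨdint' : Integrable Ψd μ := hΨd_on
  have step4 : ∫ s, Ψd s * (Φd 1 - Φd s) ∂μ = Φd 1 * (∫ s, Ψd s ∂μ) - ∫ s, Ψd s * Φd s ∂μ := by
    have : (fun s => Ψd s * (Φd 1 - Φd s)) = fun s => Φd 1 * Ψd s - Ψd s * Φd s := by
      funext s; ring
    rw [this, integral_sub (hΨdint'.const_mul _) intΨdΦd, integral_const_mul]
  have step5 : ∫ s, Ψd s ∂μ = 0 := by
    have : ∫ s, Ψd s ∂μ = ∫ s in (0:ℝ)..1, Ψd s := by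
      rw [intervalIntegral.integral_of_le h01]
    rw [this, ← hΨ 1 (by norm_num), hΨ1]
  have final : ∫ x, Φdd x * Ψ x ∂μ = - ∫ s, Ψd s * Φd s ∂μ := by
    rw [step1, step2, step3, step4, step5]; ring
  rw [show (∫ x in Ioc (0:ℝ) 1, Φdd x * Ψ x) = ∫ x, Φdd x * Ψ x ∂μ from rfl, final]
  congr 1
  exact setIntegral_congr_fun measurableSet_Ioc (fun x _ => mul_comm _ _)


lemma mu01_eq_Ioc : mu01 = volume.restrict (Ioc (0:ℝ) 1) :=
  Measure.restrict_congr_set Ioo_ae_eq_Ioc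

/-- THE matrix identity: `(λ − λ̃) ⟪φ, ψ⟫ = ∫ (q − q̃) φ ψ`. -/
lemma eig_identity {q qt : ℝ → ℝ} (hq : MemLp q ⊤ mu01) (hqt : MemLp qt ⊤ mu01)
    {lamv lamtv : ℝ} {φ ψ : L2}
    (hφ : IsDirichletEigenfunction q lamv φ) (hψ : IsDirichletEigenfunction qt lamtv ψ) :
    (lamv - lamtv) * ⟪φ, ψ⟫ = Bform (fun x => q x - qt x) φ ψ := by
  obtain ⟨Φ, Φd, Φdd, hrepφ, hΦd_int, hΦdd_int, hΦrep, hΦdrep, hΦdd2, hΦ0, hΦ1, heqφ⟩ := hφ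
  obtain ⟨Ψ, Ψd, Ψdd, hrepψ, hΨd_int, hΨdd_int, hΨrep, hΨdrep, hΨdd2, hΨ0, hΨ1, heqψ⟩ := hψ
  have hΦ2 : MemLp Φ 2 mu01 := (Lp.memLp φ).ae_eq hrepφ
  have hΨ2 : MemLp Ψ 2 mu01 := (Lp.memLp ψ).ae_eq hrepψ
  have iΦΨ : Integrable (fun x => Φ x * Ψ x) mu01 := memL2_mul_integrable hΦ2 hΨ2
  have iΦddΨ : Integrable (fun x => Φdd x * Ψ x) mu01 := memL2_mul_integrable hΦdd2 hΨ2
  have iΦΨdd : Integrable (fun x => Φ x * Ψdd x) mu01 := memL2_mul_integrable hΦ2 hΨdd2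
  have iqΦΨ : Integrable (fun x => q x * (Φ x * Ψ x)) mu01 :=
    iΦΨ.bdd_mul (c := (eLpNorm q ⊤ mu01).toReal) hq.aestronglyMeasurable
      (by filter_upwards [ae_bound_of_memtop hq] with x hx; simpa [Real.norm_eq_abs] using hx)
  have iqtΦΨ : Integrable (fun x => qt x * (Φ x * Ψ x)) mu01 :=
    iΦΨ.bdd_mul (c := (eLpNorm qt ⊤ mu01).toReal) hqt.aestronglyMeasurable
      (by filter_upwards [ae_bound_of_memtop hqt] with x hx; simpa [Real.norm_eq_abs] using hx)
  have hinner : ⟪φ, ψ⟫ = ∫ x, Φ x * Ψ x ∂mu01 := by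
    rw [MeasureTheory.L2.inner_def]
    refine integral_congr_ae ?_
    filter_upwards [hrepφ, hrepψ] with x h1 h2
    rw [h1, h2]; simp [RCLike.inner_apply, mul_comm]
  -- E1
  have E1 : lamv * ∫ x, Φ x * Ψ x ∂mu01 =
      (∫ x, q x * (Φ x * Ψ x) ∂mu01) - ∫ x, Φdd x * Ψ x ∂mu01 := by
    rw [← integral_const_mul, ← integral_sub iqΦΨ iΦddΨ]
    refine integral_congr_ae ?_
    filter_upwards [heqφ] with x hx
    have : lamv * Φ x = -Φdd x + q x * Φ x := hx.symm
    calc lamv * (Φ x * Ψ x) = (lamv * Φ x) * Ψ x := by ring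
      _ = (-Φdd x + q x * Φ x) * Ψ x := by rw [this]
      _ = q x * (Φ x * Ψ x) - Φdd x * Ψ x := by ring
  have E2 : lamtv * ∫ x, Φ x * Ψ x ∂mu01 =
      (∫ x, qt x * (Φ x * Ψ x) ∂mu01) - ∫ x, Φ x * Ψdd x ∂mu01 := by
    rw [← integral_const_mul, ← integral_sub iqtΦΨ iΦΨdd]
    refine integral_congr_ae ?_
    filter_upwards [heqψ] with x hx
    have : lamtv * Ψ x = -Ψdd x + qt x * Ψ x := hx.symm
    calc lamtv * (Φ x * Ψ x) = Φ x * (lamtv * Ψ x) := by ring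
      _ = Φ x * (-Ψdd x + qt x * Ψ x) := by rw [this]
      _ = qt x * (Φ x * Ψ x) - Φ x * Ψdd x := by ring
  -- E3 : symmetry of second derivatives integral
  have E3 : ∫ x, Φdd x * Ψ x ∂mu01 = ∫ x, Φ x * Ψdd x ∂mu01 := by
    have hΨ' : ∀ x ∈ Icc (0:ℝ) 1, Ψ x = ∫ s in (0:ℝ)..x, Ψd s := by
      intro x hx; rw [hΨrep x hx, hΨ0, zero_add]
    have hΦ' : ∀ x ∈ Icc (0:ℝ) 1, Φ x = ∫ s in (0:ℝ)..x, Φd s := by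
      intro x hx; rw [hΦrep x hx, hΦ0, zero_add]
    have h1 : ∫ x in Ioc (0:ℝ) 1, Φdd x * Ψ x = - ∫ x in Ioc (0:ℝ) 1, Φd x * Ψd x :=
      ibp_core hΦdd_int hΨd_int hΦdrep hΨ' hΨ1
    have h2 : ∫ x in Ioc (0:ℝ) 1, Ψdd x * Φ x = - ∫ x in Ioc (0:ℝ) 1, Ψd x * Φd x :=
      ibp_core hΨdd_int hΦd_int hΨdrep hΦ' hΦ1
    rw [mu01_eq_Ioc, h1]
    rw [show (∫ x in Ioc (0:ℝ) 1, Φ x * Ψdd x) = ∫ x in Ioc (0:ℝ) 1, Ψdd x * Φ x from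
      setIntegral_congr_fun measurableSet_Ioc (fun x _ => mul_comm _ _), h2]
    congr 1
    exact setIntegral_congr_fun measurableSet_Ioc (fun x _ => mul_comm _ _)
  -- combine
  have hsub : (lamv - lamtv) * ∫ x, Φ x * Ψ x ∂mu01 =
      (∫ x, q x * (Φ x * Ψ x) ∂mu01) - ∫ x, qt x * (Φ x * Ψ x) ∂mu01 := by
    have := congrArg₂ (· - ·) E1 E2
    rw [sub_mul, this, E3]; ring
  rw [hinner, hsub, Bform, ← integral_sub iqΦΨ iqtΦΨ]
  refine integral_congr_ae ?_
  filter_upwards [hrepφ, hrepψ] with x h1 h2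
  rw [h1, h2]; ring


section wsum

variable {E : Type*} [NormedAddCommGroup E] [InnerProductSpace ℝ E] [CompleteSpace E]

lemma rpow_toReal_two (a : ℝ) : a ^ ((2:ℝ≥0∞)).toReal = a ^ (2:ℕ) := by
  have h2 : ((2:ℝ≥0∞)).toReal = ((2:ℕ) : ℝ) := by simp
  rw [h2, Real.rpow_natCast]

lemma hasSum_repr' (b : HilbertBasis ℕ ℝ E) (y : E) :
    HasSum (fun m => ⟪y, b m⟫ • b m) y := by
  have := b.hasSum_repr y
  refine this.congr_fun fun m => ?_
  rw [b.repr_apply_apply, real_inner_comm]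

lemma wsum_memℓp (b : HilbertBasis ℕ ℝ E) (w : ℕ → ℝ) {K : ℝ} (hw : ∀ n, |w n| ≤ K) (x : E) :
    Memℓp (fun n => w n * ⟪x, b n⟫) 2 := by
  have h2 : (0:ℝ) < (2 : ℝ≥0∞).toReal := by norm_num
  rw [memℓp_gen_iff h2]
  have hsum : Summable (fun n => ‖b.repr x n‖ ^ (2:ℝ≥0∞).toReal) := by
    have := lp.memℓp (b.repr x)
    rwa [memℓp_gen_iff h2] at this
  refine Summable.of_nonneg_of_le (fun n => by positivity) (fun n => ?_)
    (hsum.mul_left (K^2))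
  rw [rpow_toReal_two, rpow_toReal_two]
  have h3 : ‖w n * ⟪x, b n⟫‖ = |w n| * ‖⟪x, b n⟫‖ := by
    rw [Real.norm_eq_abs, Real.norm_eq_abs, abs_mul]
  have h4 : ‖⟪x, b n⟫‖ = ‖b.repr x n‖ := by
    rw [b.repr_apply_apply, real_inner_comm]
  rw [h3, h4, mul_pow]
  have hK : 0 ≤ K := (abs_nonneg (w 0)).trans (hw 0)
  exact mul_le_mul_of_nonneg_right (by nlinarith [hw n, abs_nonneg (w n)])
    (by positivity)

def wsumF (b : HilbertBasis ℕ ℝ E) (w : ℕ → ℝ) {K : ℝ} (hw : ∀ n, |w n| ≤ K) (x : E) :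
    lp (fun _ : ℕ => ℝ) 2 := ⟨fun n => w n * ⟪x, b n⟫, wsum_memℓp b w hw x⟩

lemma wsum_hasSum (b : HilbertBasis ℕ ℝ E) (w : ℕ → ℝ) {K : ℝ} (hw : ∀ n, |w n| ≤ K) (x : E) :
    HasSum (fun n => (w n * ⟪x, b n⟫) • b n) (b.repr.symm (wsumF b w hw x)) := by
  have := b.hasSum_repr_symm (wsumF b w hw x)
  exact this.congr_fun fun n => rfl

lemma wsum_summable (b : HilbertBasis ℕ ℝ E) (w : ℕ → ℝ) {K : ℝ} (hw : ∀ n, |w n| ≤ K) (x : E) :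
    Summable (fun n => (w n * ⟪x, b n⟫) • b n) :=
  ⟨_, wsum_hasSum b w hw x⟩

lemma wsum_norm_le (b : HilbertBasis ℕ ℝ E) (w : ℕ → ℝ) {K : ℝ} (hw : ∀ n, |w n| ≤ K)
    (hK : 0 ≤ K) (x : E) :
    ‖∑' n, (w n * ⟪x, b n⟫) • b n‖ ≤ K * ‖x‖ := by
  rw [(wsum_hasSum b w hw x).tsum_eq, LinearIsometryEquiv.norm_map]
  have h2 : (0:ℝ) < (2 : ℝ≥0∞).toReal := by norm_num
  refine lp.norm_le_of_tsum_le h2 (by positivity) ?_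
  have hx : ∑' n, ‖b.repr x n‖ ^ (2:ℝ≥0∞).toReal = ‖x‖ ^ (2:ℝ≥0∞).toReal := by
    rw [← lp.norm_rpow_eq_tsum h2, LinearIsometryEquiv.norm_map]
  have hsum : Summable (fun n => ‖b.repr x n‖ ^ (2:ℝ≥0∞).toReal) := by
    have := lp.memℓp (b.repr x)
    rwa [memℓp_gen_iff h2] at this
  have hsum2 : Summable (fun n => ‖(wsumF b w hw x) n‖ ^ (2:ℝ≥0∞).toReal) := by
    have := lp.memℓp (wsumF b w hw x)
    rwa [memℓp_gen_iff h2] at this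
  have hle : ∑' n, ‖(wsumF b w hw x) n‖ ^ (2:ℝ≥0∞).toReal ≤
      ∑' n, K^2 * ‖b.repr x n‖ ^ (2:ℝ≥0∞).toReal := by
    refine Summable.tsum_le_tsum (fun n => ?_) hsum2 (hsum.mul_left _)
    rw [rpow_toReal_two, rpow_toReal_two]
    have h3 : ‖(wsumF b w hw x) n‖ = |w n| * ‖⟪x, b n⟫‖ := by
      show ‖w n * ⟪x, b n⟫‖ = _
      rw [Real.norm_eq_abs, Real.norm_eq_abs, abs_mul]
    have h4 : ‖⟪x, b n⟫‖ = ‖b.repr x n‖ := by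
      rw [b.repr_apply_apply, real_inner_comm]
    rw [h3, h4, mul_pow]
    exact mul_le_mul_of_nonneg_right (by nlinarith [hw n, abs_nonneg (w n)]) (by positivity)
  refine hle.trans ?_
  rw [tsum_mul_left, hx, rpow_toReal_two, rpow_toReal_two, mul_pow]

end wsum



section wsumPrime
variable {E : Type*} [NormedAddCommGroup E] [InnerProductSpace ℝ E] [CompleteSpace E]

lemma wsum_hasSum' (b : HilbertBasis ℕ ℝ E) (w : ℕ → ℝ) {K : ℝ} (hw : ∀ n, |w n| ≤ K) (x : E) :
    HasSum (fun n => (w n * ⟪x, b n⟫) • b n) (∑' n, (w n * ⟪x, b n⟫) • b n) :=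
  (wsum_summable b w hw x).hasSum

lemma wsum_norm_le' (b : HilbertBasis ℕ ℝ E) (w : ℕ → ℝ) {K : ℝ} (hw : ∀ n, |w n| ≤ K)
    (hK : 0 ≤ K) (x : E) :
    ‖∑' n, (w n * ⟪x, b n⟫) • b n‖ ≤ K * ‖x‖ :=
  wsum_norm_le b w hw hK x

end wsumPrime

/-- Core comparison of the two "semigroups". -/
lemma semigroup_compare {q qt : ℝ → ℝ} (hq : MemLp q ⊤ mu01) (hqt : MemLp qt ⊤ mu01)
    (b bt : HilbertBasis ℕ ℝ L2) {lam lamt : ℕ → ℝ}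
    (hlam : ∀ n, 0 ≤ lam n) (hlamt : ∀ n, 0 ≤ lamt n)
    (heig : ∀ n, IsDirichletEigenfunction q (lam n) (b n))
    (heigt : ∀ n, IsDirichletEigenfunction qt (lamt n) (bt n))
    {β : ℝ} (hβ : 0 ≤ β) (x : L2) :
    ‖(∑' n, (Real.exp (-(lam n * β)) * ⟪x, b n⟫) • b n) -
      ∑' m, (Real.exp (-(lamt m * β)) * ⟪x, bt m⟫) • bt m‖ ≤
      β * (eLpNorm (fun y => q y - qt y) ⊤ mu01).toReal * ‖x‖ := by
  set g : ℝ → ℝ := fun y => q y - qt y with hgdef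
  have hg : MemLp g ⊤ mu01 := hq.sub hqt
  set δ : ℝ := (eLpNorm g ⊤ mu01).toReal with hδdef
  have hδ0 : 0 ≤ δ := ENNReal.toReal_nonneg
  set w : ℕ → ℝ := fun n => Real.exp (-(lam n * β)) with hwdef
  set wt : ℕ → ℝ := fun m => Real.exp (-(lamt m * β)) with hwtdef
  have hw1 : ∀ n, |w n| ≤ 1 := fun n => by
    rw [abs_of_pos (Real.exp_pos _)]
    exact Real.exp_le_one_iff.2 (neg_nonpos.2 (mul_nonneg (hlam n) hβ))
  have hwt1 : ∀ m, |wt m| ≤ 1 := fun m => by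
    rw [abs_of_pos (Real.exp_pos _)]
    exact Real.exp_le_one_iff.2 (neg_nonpos.2 (mul_nonneg (hlamt m) hβ))
  set Sx : L2 := ∑' n, (w n * ⟪x, b n⟫) • b n with hSxdef
  set Stx : L2 := ∑' m, (wt m * ⟪x, bt m⟫) • bt m with hStxdef
  have hSx : HasSum (fun n => (w n * ⟪x, b n⟫) • b n) Sx := wsum_hasSum' b w hw1 x
  have hStx : HasSum (fun m => (wt m * ⟪x, bt m⟫) • bt m) Stx := wsum_hasSum' bt wt hwt1 x
  -- the key inner-product estimate
  have key : ∀ y : L2, |⟪Sx - Stx, y⟫| ≤ β * δ * (‖x‖ * ‖y‖) := by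
    intro y
    set Sty : L2 := ∑' m, (wt m * ⟪y, bt m⟫) • bt m with hStydef
    have hSty : HasSum (fun m => (wt m * ⟪y, bt m⟫) • bt m) Sty := wsum_hasSum' bt wt hwt1 y
    -- Claim B : the finite double-sum bound
    have claimB : ∀ P Q : Finset ℕ,
        |∑ n ∈ P, ∑ m ∈ Q, (⟪x, b n⟫ * (⟪y, bt m⟫ * ⟪b n, bt m⟫)) * (w n - wt m)|
          ≤ β * δ * (‖x‖ * ‖y‖) := by
      intro P Q
      -- rewrite as an interval integral
      have hcontE : ∀ n m : ℕ, Continuous (fun s : ℝ =>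
          (⟪x, b n⟫ * (⟪y, bt m⟫ * ⟪b n, bt m⟫)) *
            ((lamt m - lam n) * Real.exp (s * (lamt m - lam n) - β * lamt m))) := by
        intro n m
        exact continuous_const.mul (continuous_const.mul
          (Real.continuous_exp.comp ((continuous_mul_right _).sub continuous_const)))
      have hterm : ∀ n m : ℕ,
          (⟪x, b n⟫ * (⟪y, bt m⟫ * ⟪b n, bt m⟫)) * (w n - wt m) =
          ∫ s in (0:ℝ)..β, (⟪x, b n⟫ * (⟪y, bt m⟫ * ⟪b n, bt m⟫)) *
            ((lamt m - lam n) * Real.exp (s * (lamt m - lam n) - β * lamt m)) := by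
        intro n m
        rw [intervalIntegral.integral_const_mul]
        congr 1
        have h := exp_neg_sub_eq_integral (lam n) (lamt m) β
        simp only [hwdef, hwtdef]
        rw [mul_comm (lam n) β, mul_comm (lamt m) β]
        exact h
      have hGH : ∑ n ∈ P, ∑ m ∈ Q, (⟪x, b n⟫ * (⟪y, bt m⟫ * ⟪b n, bt m⟫)) * (w n - wt m) =
          ∫ s in (0:ℝ)..β, ∑ n ∈ P, ∑ m ∈ Q,
            (⟪x, b n⟫ * (⟪y, bt m⟫ * ⟪b n, bt m⟫)) *
              ((lamt m - lam n) * Real.exp (s * (lamt m - lam n) - β * lamt m)) := by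
        have step1 : ∑ n ∈ P, ∑ m ∈ Q, (⟪x, b n⟫ * (⟪y, bt m⟫ * ⟪b n, bt m⟫)) * (w n - wt m) =
            ∑ n ∈ P, ∫ s in (0:ℝ)..β, ∑ m ∈ Q,
              (⟪x, b n⟫ * (⟪y, bt m⟫ * ⟪b n, bt m⟫)) *
                ((lamt m - lam n) * Real.exp (s * (lamt m - lam n) - β * lamt m)) := by
          refine Finset.sum_congr rfl fun n _ => ?_
          rw [intervalIntegral.integral_finset_sum
            (fun m _ => ((hcontE n m).intervalIntegrable 0 β))]
          exact Finset.sum_congr rfl fun m _ => hterm n m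
        rw [step1, ← intervalIntegral.integral_finset_sum
          (fun n _ => ((continuous_finset_sum Q (fun m _ => hcontE n m)).intervalIntegrable 0 β))]
      rw [hGH]
      -- bound the integrand
      have hbound : ∀ s ∈ Set.uIoc (0:ℝ) β,
          ‖∑ n ∈ P, ∑ m ∈ Q, (⟪x, b n⟫ * (⟪y, bt m⟫ * ⟪b n, bt m⟫)) *
              ((lamt m - lam n) * Real.exp (s * (lamt m - lam n) - β * lamt m))‖
            ≤ δ * (‖x‖ * ‖y‖) := by
        intro s hs
        rw [Set.uIoc_of_le hβ] at hs
        have hs0 : 0 ≤ s := hs.1.le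
        have hsβ : s ≤ β := hs.2
        set u : L2 := ∑ n ∈ P, (Real.exp (-(s * lam n)) * ⟪x, b n⟫) • b n with hudef
        set v : L2 := ∑ m ∈ Q, (Real.exp (-((β - s) * lamt m)) * ⟪y, bt m⟫) • bt m with hvdef
        have hBuv : Bform g u v = ∑ n ∈ P, ∑ m ∈ Q,
            (Real.exp (-(s * lam n)) * ⟪x, b n⟫) *
              ((Real.exp (-((β - s) * lamt m)) * ⟪y, bt m⟫) * Bform g (b n) (bt m)) := by
          rw [hudef, Bform_sum_left hg]
          refine Finset.sum_congr rfl (fun n _ => ?_)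
          rw [Bform_smul_left, hvdef, Bform_sum_right hg, Finset.mul_sum]
          refine Finset.sum_congr rfl (fun m _ => ?_)
          rw [Bform_smul_right]
        have hHeq : ∑ n ∈ P, ∑ m ∈ Q, (⟪x, b n⟫ * (⟪y, bt m⟫ * ⟪b n, bt m⟫)) *
              ((lamt m - lam n) * Real.exp (s * (lamt m - lam n) - β * lamt m)) =
            - Bform g u v := by
          rw [hBuv, ← Finset.sum_neg_distrib]
          refine Finset.sum_congr rfl (fun n _ => ?_)
          rw [← Finset.sum_neg_distrib]
          refine Finset.sum_congr rfl (fun m _ => ?_)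
          have hB : Bform g (b n) (bt m) = (lam n - lamt m) * ⟪b n, bt m⟫ :=
            (eig_identity hq hqt (heig n) (heigt m)).symm
          have hE : Real.exp (s * (lamt m - lam n) - β * lamt m) =
              Real.exp (-(s * lam n)) * Real.exp (-((β - s) * lamt m)) := by
            rw [← Real.exp_add]; ring_nf
          rw [hB, hE]
          ring
        rw [hHeq, Real.norm_eq_abs, abs_neg]
        refine (Bform_abs_le hg u v).trans ?_
        have hnu : ‖u‖ ≤ ‖x‖ := by
          have horm : ‖u‖ ^ 2 = ∑ n ∈ P, (Real.exp (-(s * lam n)) * ⟪x, b n⟫) ^ 2 := by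
            have := b.orthonormal.inner_sum
              (fun n => Real.exp (-(s * lam n)) * ⟪x, b n⟫)
              (fun n => Real.exp (-(s * lam n)) * ⟪x, b n⟫) P
            rw [hudef, ← real_inner_self_eq_norm_sq]
            rw [this]
            refine Finset.sum_congr rfl (fun n _ => ?_)
            simp [sq]
          have hb2 : ∑ n ∈ P, (Real.exp (-(s * lam n)) * ⟪x, b n⟫) ^ 2 ≤
              ∑ n ∈ P, ‖⟪b n, x⟫‖ ^ 2 := by
            refine Finset.sum_le_sum (fun n _ => ?_)
            rw [Real.norm_eq_abs, sq_abs, real_inner_comm (b n) x, mul_pow]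
            have he : Real.exp (-(s * lam n)) ≤ 1 :=
              Real.exp_le_one_iff.2 (neg_nonpos.2 (mul_nonneg hs0 (hlam n)))
            have he2 : Real.exp (-(s * lam n)) ^ 2 ≤ 1 := by
              nlinarith [Real.exp_pos (-(s * lam n))]
            nlinarith [sq_nonneg (⟪x, b n⟫ : ℝ), he2]
          have hb3 : ∑ n ∈ P, ‖⟪b n, x⟫‖ ^ 2 ≤ ‖x‖ ^ 2 :=
            b.orthonormal.sum_inner_products_le x
          have hfin : ‖u‖ ^ 2 ≤ ‖x‖ ^ 2 := by rw [horm]; exact hb2.trans hb3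
          have := Real.sqrt_le_sqrt hfin
          rwa [Real.sqrt_sq (norm_nonneg _), Real.sqrt_sq (norm_nonneg _)] at this
        have hnv : ‖v‖ ≤ ‖y‖ := by
          have horm : ‖v‖ ^ 2 = ∑ m ∈ Q, (Real.exp (-((β - s) * lamt m)) * ⟪y, bt m⟫) ^ 2 := by
            have := bt.orthonormal.inner_sum
              (fun m => Real.exp (-((β - s) * lamt m)) * ⟪y, bt m⟫)
              (fun m => Real.exp (-((β - s) * lamt m)) * ⟪y, bt m⟫) Q
            rw [hvdef, ← real_inner_self_eq_norm_sq]
            rw [this]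
            refine Finset.sum_congr rfl (fun m _ => ?_)
            simp [sq]
          have hb2 : ∑ m ∈ Q, (Real.exp (-((β - s) * lamt m)) * ⟪y, bt m⟫) ^ 2 ≤
              ∑ m ∈ Q, ‖⟪bt m, y⟫‖ ^ 2 := by
            refine Finset.sum_le_sum (fun m _ => ?_)
            rw [Real.norm_eq_abs, sq_abs, real_inner_comm (bt m) y, mul_pow]
            have he : Real.exp (-((β - s) * lamt m)) ≤ 1 :=
              Real.exp_le_one_iff.2 (neg_nonpos.2 (mul_nonneg (by linarith) (hlamt m)))
            have he2 : Real.exp (-((β - s) * lamt m)) ^ 2 ≤ 1 := by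
              nlinarith [Real.exp_pos (-((β - s) * lamt m))]
            nlinarith [sq_nonneg (⟪y, bt m⟫ : ℝ), he2]
          have hb3 : ∑ m ∈ Q, ‖⟪bt m, y⟫‖ ^ 2 ≤ ‖y‖ ^ 2 :=
            bt.orthonormal.sum_inner_products_le y
          have hfin : ‖v‖ ^ 2 ≤ ‖y‖ ^ 2 := by rw [horm]; exact hb2.trans hb3
          have := Real.sqrt_le_sqrt hfin
          rwa [Real.sqrt_sq (norm_nonneg _), Real.sqrt_sq (norm_nonneg _)] at this
        calc δ * (‖u‖ * ‖v‖) ≤ δ * (‖x‖ * ‖y‖) := by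
              refine mul_le_mul_of_nonneg_left ?_ hδ0
              exact mul_le_mul hnu hnv (norm_nonneg _) (norm_nonneg _)
          _ = δ * (‖x‖ * ‖y‖) := rfl
      have hni := intervalIntegral.norm_integral_le_of_norm_le_const hbound
      rw [Real.norm_eq_abs] at hni
      refine hni.trans (le_of_eq ?_)
      rw [sub_zero, abs_of_nonneg hβ]
      ring
    -- Claim C: partial sums in P converge
    have claimP : ∀ P : Finset ℕ,
        |∑ n ∈ P, ((w n * ⟪x, b n⟫) * ⟪b n, y⟫ - ⟪x, b n⟫ * ⟪b n, Sty⟫)|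
          ≤ β * δ * (‖x‖ * ‖y‖) := by
      intro P
      have h1 : ∀ n : ℕ, HasSum (fun m => ⟪x, b n⟫ * (w n * (⟪y, bt m⟫ * ⟪b n, bt m⟫) -
          (wt m * ⟪y, bt m⟫) * ⟪b n, bt m⟫))
          (⟪x, b n⟫ * (w n * ⟪b n, y⟫ - ⟪b n, Sty⟫)) := by
        intro n
        have hy : HasSum (fun m => ⟪y, bt m⟫ * ⟪b n, bt m⟫) ⟪b n, y⟫ := by
          have := (innerSL ℝ (b n)).hasSum (hasSum_repr' bt y)
          refine this.congr_fun fun m => ?_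
          simp only [innerSL_apply_apply, real_inner_smul_right]
        have hsty : HasSum (fun m => (wt m * ⟪y, bt m⟫) * ⟪b n, bt m⟫) ⟪b n, Sty⟫ := by
          have := (innerSL ℝ (b n)).hasSum hSty
          refine this.congr_fun fun m => ?_
          simp only [innerSL_apply_apply, real_inner_smul_right]
        exact ((hy.mul_left (w n)).sub hsty).mul_left _
      have htend : Filter.Tendsto
          (fun Q : Finset ℕ => ∑ n ∈ P, ∑ m ∈ Q,
            (⟪x, b n⟫ * (⟪y, bt m⟫ * ⟪b n, bt m⟫)) * (w n - wt m))
          Filter.atTop (nhds (∑ n ∈ P, ⟪x, b n⟫ * (w n * ⟪b n, y⟫ - ⟪b n, Sty⟫))) := by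
        have := tendsto_finset_sum P (fun n _ => (h1 n))
        refine this.congr fun Q => ?_
        refine Finset.sum_congr rfl fun n _ => Finset.sum_congr rfl fun m _ => ?_
        ring
      have hle : |∑ n ∈ P, ⟪x, b n⟫ * (w n * ⟪b n, y⟫ - ⟪b n, Sty⟫)| ≤ β * δ * (‖x‖ * ‖y‖) := by
        refine le_of_tendsto (htend.abs) ?_
        filter_upwards with Q using claimB P Q
      refine le_trans (le_of_eq ?_) hle
      congr 1
      exact Finset.sum_congr rfl fun n _ => by ring
    -- pass to the limit in P
    have hSxy : HasSum (fun n => (w n * ⟪x, b n⟫) * ⟪b n, y⟫) ⟪Sx, y⟫ := by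
      have := (innerSL ℝ y).hasSum hSx
      rw [real_inner_comm]
      refine this.congr_fun fun n => ?_
      simp only [innerSL_apply_apply, real_inner_smul_right]
      rw [real_inner_comm (b n) y]
    have hxSty : HasSum (fun n => ⟪x, b n⟫ * ⟪b n, Sty⟫) ⟪x, Sty⟫ := by
      have := (innerSL ℝ Sty).hasSum (hasSum_repr' b x)
      rw [real_inner_comm]
      refine this.congr_fun fun n => ?_
      simp only [innerSL_apply_apply, real_inner_smul_right]
      rw [real_inner_comm (b n) Sty]
    have hfinal : |⟪Sx, y⟫ - ⟪x, Sty⟫| ≤ β * δ * (‖x‖ * ‖y‖) := by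
      have hdiff := hSxy.sub hxSty
      refine le_of_tendsto (hdiff.abs) ?_
      filter_upwards with P using claimP P
    -- symmetry : ⟪x, Sty⟫ = ⟪Stx, y⟫
    have hsymm : ⟪x, Sty⟫ = ⟪Stx, y⟫ := by
      have e1 : HasSum (fun m => (wt m * ⟪y, bt m⟫) * ⟪x, bt m⟫) ⟪x, Sty⟫ := by
        have := (innerSL ℝ x).hasSum hSty
        refine this.congr_fun fun m => ?_
        simp only [innerSL_apply_apply, real_inner_smul_right]
      have e2 : HasSum (fun m => (wt m * ⟪x, bt m⟫) * ⟪y, bt m⟫) ⟪Stx, y⟫ := by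
        have := (innerSL ℝ y).hasSum hStx
        rw [real_inner_comm]
        refine this.congr_fun fun m => ?_
        simp only [innerSL_apply_apply, real_inner_smul_right]
      rw [← e1.tsum_eq, ← e2.tsum_eq]
      exact tsum_congr fun m => by ring
    rw [inner_sub_left, ← hsymm]
    exact hfinal
  -- conclude with y := Sx - Stx
  have hD := key (Sx - Stx)
  have hDsq : ⟪Sx - Stx, Sx - Stx⟫ = ‖Sx - Stx‖ ^ 2 := real_inner_self_eq_norm_sq _
  rcases eq_or_lt_of_le (norm_nonneg (Sx - Stx)) with h0 | hpos
  · rw [← h0]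
    positivity
  · have h1 : ‖Sx - Stx‖ ^ 2 ≤ β * δ * (‖x‖ * ‖Sx - Stx‖) := by
      rw [← hDsq]
      calc ⟪Sx - Stx, Sx - Stx⟫ ≤ |⟪Sx - Stx, Sx - Stx⟫| := le_abs_self _
        _ ≤ β * δ * (‖x‖ * ‖Sx - Stx‖) := hD
    have h2 : ‖Sx - Stx‖ * ‖Sx - Stx‖ ≤ (β * δ * ‖x‖) * ‖Sx - Stx‖ := by
      rw [← sq]
      calc ‖Sx - Stx‖ ^ 2 ≤ β * δ * (‖x‖ * ‖Sx - Stx‖) := h1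
        _ = (β * δ * ‖x‖) * ‖Sx - Stx‖ := by ring
    exact le_of_mul_le_mul_right h2 hpos


 section wsumSub
variable {E : Type*} [NormedAddCommGroup E] [InnerProductSpace ℝ E] [CompleteSpace E]

/-- contraction in the data. -/
lemma wsum_sub_norm_le (b : HilbertBasis ℕ ℝ E) (w : ℕ → ℝ) {K : ℝ} (hw : ∀ n, |w n| ≤ K)
    (hK : 0 ≤ K) (x x' : E) :
    ‖(∑' n, (w n * ⟪x, b n⟫) • b n) - ∑' n, (w n * ⟪x', b n⟫) • b n‖ ≤ K * ‖x - x'‖ := by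
  have h1 := wsum_hasSum' b w hw x
  have h2 := wsum_hasSum' b w hw x'
  have h3 : HasSum (fun n => (w n * ⟪x - x', b n⟫) • b n)
      ((∑' n, (w n * ⟪x, b n⟫) • b n) - ∑' n, (w n * ⟪x', b n⟫) • b n) := by
    refine (h1.sub h2).congr_fun fun n => ?_
    rw [inner_sub_left, mul_sub, sub_smul]
  rw [← h3.tsum_eq]
  exact wsum_norm_le' b w hw hK (x - x')

/-- difference of weights. -/
lemma wsum_wdiff_norm_le (b : HilbertBasis ℕ ℝ E) (w w' : ℕ → ℝ)
    {K₁ K₂ K : ℝ} (hw : ∀ n, |w n| ≤ K₁) (hw' : ∀ n, |w' n| ≤ K₂)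
    (hd : ∀ n, |w n - w' n| ≤ K) (hK : 0 ≤ K) (x : E) :
    ‖(∑' n, (w n * ⟪x, b n⟫) • b n) - ∑' n, (w' n * ⟪x, b n⟫) • b n‖ ≤ K * ‖x‖ := by
  have h1 := wsum_hasSum' b w hw x
  have h2 := wsum_hasSum' b w' hw' x
  have h3 : HasSum (fun n => ((w n - w' n) * ⟪x, b n⟫) • b n)
      ((∑' n, (w n * ⟪x, b n⟫) • b n) - ∑' n, (w' n * ⟪x, b n⟫) • b n) := by
    refine (h1.sub h2).congr_fun fun n => ?_
    rw [sub_mul, sub_smul]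
  rw [← h3.tsum_eq]
  exact wsum_norm_le' b (fun n => w n - w' n) hd hK x

end wsumSub

/-- uniqueness of the very weak solution: for every `M ∈ ℕ` there exists
`C_M > 0` such that `sup_{t∈[0,T]} ‖u_ε(t) − ũ_ε(t)‖_{L²} ≤ C_M ε^M` for all
`ε ∈ (0,1]`. -/
theorem stmt12
    (T a₀ : ℝ) (hT : 0 < T) (ha₀ : 0 < a₀)
    (qe qet : ℝ → ℝ → ℝ)
    (hqe : ∀ ε ∈ Ioc (0:ℝ) 1, MemLp (qe ε) ⊤ mu01)
    (hqet : ∀ ε ∈ Ioc (0:ℝ) 1, MemLp (qet ε) ⊤ mu01)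
    (ae aet : ℝ → ℝ → ℝ)
    (haeBdd : ∀ ε ∈ Ioc (0:ℝ) 1, MemLp (ae ε) ⊤ (volume.restrict (Icc (0:ℝ) T)))
    (haetBdd : ∀ ε ∈ Ioc (0:ℝ) 1, MemLp (aet ε) ⊤ (volume.restrict (Icc (0:ℝ) T)))
    (hae : ∀ ε ∈ Ioc (0:ℝ) 1, ∀ᵐ t ∂(volume.restrict (Icc (0:ℝ) T)), a₀ ≤ ae ε t)
    (haet : ∀ ε ∈ Ioc (0:ℝ) 1, ∀ᵐ t ∂(volume.restrict (Icc (0:ℝ) T)), a₀ ≤ aet ε t)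
    (u0e u0et : ℝ → L2) (U0 U0d U0dd Ut0 Ut0d Ut0dd : ℝ → ℝ → ℝ)
    (hu0e : ∀ ε ∈ Ioc (0:ℝ) 1, IsH2DirichletWith (u0e ε) (U0 ε) (U0d ε) (U0dd ε))
    (hu0et : ∀ ε ∈ Ioc (0:ℝ) 1, IsH2DirichletWith (u0et ε) (Ut0 ε) (Ut0d ε) (Ut0dd ε))
    -- moderateness of the nets
    (C : ℝ) (N : ℕ) (hC : 0 < C)
    (hqmod : ∀ ε ∈ Ioc (0:ℝ) 1, (eLpNorm (qe ε) ⊤ mu01).toReal ≤ C * ε ^ (-N : ℤ))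
    (hqtmod : ∀ ε ∈ Ioc (0:ℝ) 1, (eLpNorm (qet ε) ⊤ mu01).toReal ≤ C * ε ^ (-N : ℤ))
    (hamod : ∀ ε ∈ Ioc (0:ℝ) 1,
      (eLpNorm (ae ε) ⊤ (volume.restrict (Icc (0:ℝ) T))).toReal ≤ C * ε ^ (-N : ℤ))
    (hatmod : ∀ ε ∈ Ioc (0:ℝ) 1,
      (eLpNorm (aet ε) ⊤ (volume.restrict (Icc (0:ℝ) T))).toReal ≤ C * ε ^ (-N : ℤ))
    (hu0mod : ∀ ε ∈ Ioc (0:ℝ) 1,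
      ‖u0e ε‖ + (eLpNorm (U0dd ε) 2 mu01).toReal ≤ C * ε ^ (-N : ℤ))
    (hu0tmod : ∀ ε ∈ Ioc (0:ℝ) 1,
      ‖u0et ε‖ + (eLpNorm (Ut0dd ε) 2 mu01).toReal ≤ C * ε ^ (-N : ℤ))
    -- negligibility of the differences
    (hqneg : ∀ M : ℕ, ∃ CM : ℝ, 0 < CM ∧ ∀ ε ∈ Ioc (0:ℝ) 1,
      (eLpNorm (fun x => qe ε x - qet ε x) ⊤ mu01).toReal ≤ CM * ε ^ M)
    (haneg : ∀ M : ℕ, ∃ CM : ℝ, 0 < CM ∧ ∀ ε ∈ Ioc (0:ℝ) 1,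
      (eLpNorm (fun t => ae ε t - aet ε t) ⊤ (volume.restrict (Icc (0:ℝ) T))).toReal
        ≤ CM * ε ^ M)
    (hu0neg : ∀ M : ℕ, ∃ CM : ℝ, 0 < CM ∧ ∀ ε ∈ Ioc (0:ℝ) 1,
      ‖u0e ε - u0et ε‖ ≤ CM * ε ^ M)
    -- the Hilbert bases of Dirichlet eigenfunctions
    (Φb Φbt : ℝ → HilbertBasis ℕ ℝ L2) (lam lamt : ℝ → ℕ → ℝ)
    (hlam : ∀ ε ∈ Ioc (0:ℝ) 1, ∀ n, 0 ≤ lam ε n)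
    (hlamt : ∀ ε ∈ Ioc (0:ℝ) 1, ∀ n, 0 ≤ lamt ε n)
    (hΦb : ∀ ε ∈ Ioc (0:ℝ) 1, ∀ n,
      IsDirichletEigenfunction (qe ε) (lam ε n) (Φb ε n))
    (hΦbt : ∀ ε ∈ Ioc (0:ℝ) 1, ∀ n,
      IsDirichletEigenfunction (qet ε) (lamt ε n) (Φbt ε n)) :
    ∀ M : ℕ, ∃ CM : ℝ, 0 < CM ∧ ∀ ε ∈ Ioc (0:ℝ) 1, ∀ t ∈ Icc (0:ℝ) T,
      ‖(∑' n, (Real.exp (-(lam ε n) * ∫ τ in (0:ℝ)..t, ae ε τ) *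
            ⟪u0e ε, Φb ε n⟫) • Φb ε n) -
        (∑' n, (Real.exp (-(lamt ε n) * ∫ τ in (0:ℝ)..t, aet ε τ) *
            ⟪u0et ε, Φbt ε n⟫) • Φbt ε n)‖ ≤ CM * ε ^ M := by
  intro M
  obtain ⟨CM1, hCM1pos, hCM1⟩ := hqneg (M + 2*N)
  obtain ⟨CM2, hCM2pos, hCM2⟩ := haneg (M + N)
  obtain ⟨CM3, hCM3pos, hCM3⟩ := hu0neg M
  refine ⟨T * C^2 * CM1 + C * CM2 / a₀ + CM3, by positivity, ?_⟩
  intro ε hε t ht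
  have hε0 : (0:ℝ) < ε := hε.1
  have hεne : (ε:ℝ) ≠ 0 := ne_of_gt hε0
  have ht0 : (0:ℝ) ≤ t := ht.1
  have htT : t ≤ T := ht.2
  -- finiteness of the restricted measure
  haveI hfinT : IsFiniteMeasure (volume.restrict (Icc (0:ℝ) T)) :=
    ⟨by rw [Measure.restrict_apply_univ]; exact measure_Icc_lt_top⟩
  -- interval integrability
  have hsub : Ioc (0:ℝ) t ⊆ Icc (0:ℝ) T := fun τ hτ => ⟨hτ.1.le, hτ.2.trans htT⟩
  have h_int_ae : IntervalIntegrable (ae ε) volume 0 t := by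
    refine (intervalIntegrable_iff_integrableOn_Ioc_of_le ht0).mpr ?_
    have hIcc : IntegrableOn (ae ε) (Icc 0 T) volume := (haeBdd ε hε).integrable le_top
    exact hIcc.mono_set hsub
  have h_int_aet : IntervalIntegrable (aet ε) volume 0 t := by
    refine (intervalIntegrable_iff_integrableOn_Ioc_of_le ht0).mpr ?_
    have hIcc : IntegrableOn (aet ε) (Icc 0 T) volume := (haetBdd ε hε).integrable le_top
    exact hIcc.mono_set hsub
  set β : ℝ := ∫ τ in (0:ℝ)..t, ae ε τ with hβdef
  set βt : ℝ := ∫ τ in (0:ℝ)..t, aet ε τ with hβtdef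
  set η : ℝ := (eLpNorm (fun τ => ae ε τ - aet ε τ) ⊤ (volume.restrict (Icc (0:ℝ) T))).toReal
    with hηdef
  set Aet : ℝ := (eLpNorm (aet ε) ⊤ (volume.restrict (Icc (0:ℝ) T))).toReal with hAetdef
  have hη0 : 0 ≤ η := ENNReal.toReal_nonneg
  have hAet0 : 0 ≤ Aet := ENNReal.toReal_nonneg
  -- lower bounds on β, βt
  have hlb : ∀ (f : ℝ → ℝ), IntervalIntegrable f volume 0 t →
      (∀ᵐ τ ∂(volume.restrict (Icc (0:ℝ) T)), a₀ ≤ f τ) →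
      a₀ * t ≤ ∫ τ in (0:ℝ)..t, f τ := by
    intro f hint hae'
    have h4 : 0 ≤ ∫ τ in (0:ℝ)..t, (f τ - a₀) := by
      refine intervalIntegral.integral_nonneg_of_ae_restrict ht0 ?_
      have := ae_restrict_of_ae_restrict_of_subset (Icc_subset_Icc le_rfl htT) hae'
      filter_upwards [this] with τ hτ
      simpa using hτ
    have h5 : ∫ τ in (0:ℝ)..t, (f τ - a₀) =
        (∫ τ in (0:ℝ)..t, f τ) - (t - 0) * a₀ := by
      rw [intervalIntegral.integral_sub hint (intervalIntegrable_const),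
        intervalIntegral.integral_const, smul_eq_mul]
    rw [h5] at h4
    linarith
  have hβ_lb : a₀ * t ≤ β := hlb (ae ε) h_int_ae (hae ε hε)
  have hβt_lb : a₀ * t ≤ βt := hlb (aet ε) h_int_aet (haet ε hε)
  have hβ0 : 0 ≤ β := le_trans (by positivity) hβ_lb
  have hβt0 : 0 ≤ βt := le_trans (by positivity) hβt_lb
  -- upper bound on βt
  have hβt_ub : βt ≤ T * Aet := by
    have hb : ∀ᵐ τ ∂volume, τ ∈ Set.uIoc (0:ℝ) t → ‖aet ε τ‖ ≤ Aet := by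
      have h1 := (ae_restrict_iff' measurableSet_Icc).mp (ae_bound_of_memtop (haetBdd ε hε))
      filter_upwards [h1] with τ hτ hmem
      rw [Set.uIoc_of_le ht0] at hmem
      simpa [Real.norm_eq_abs, hAetdef] using hτ (hsub hmem)
    have := intervalIntegral.norm_integral_le_of_norm_le_const_ae hb
    rw [Real.norm_eq_abs, sub_zero, abs_of_nonneg ht0] at this
    calc βt ≤ |βt| := le_abs_self _
      _ ≤ Aet * t := this
      _ ≤ Aet * T := mul_le_mul_of_nonneg_left htT hAet0
      _ = T * Aet := mul_comm _ _
  -- difference of the integrals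
  have hdiff : |β - βt| ≤ t * η := by
    have h5 : β - βt = ∫ τ in (0:ℝ)..t, (ae ε τ - aet ε τ) :=
      (intervalIntegral.integral_sub h_int_ae h_int_aet).symm
    have hb : ∀ᵐ τ ∂volume, τ ∈ Set.uIoc (0:ℝ) t → ‖ae ε τ - aet ε τ‖ ≤ η := by
      have hmem : MemLp (fun τ => ae ε τ - aet ε τ) ⊤ (volume.restrict (Icc (0:ℝ) T)) :=
        (haeBdd ε hε).sub (haetBdd ε hε)
      have h1 := (ae_restrict_iff' measurableSet_Icc).mp (ae_bound_of_memtop hmem)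
      filter_upwards [h1] with τ hτ hmem'
      rw [Set.uIoc_of_le ht0] at hmem'
      simpa [Real.norm_eq_abs, hηdef] using hτ (hsub hmem')
    have := intervalIntegral.norm_integral_le_of_norm_le_const_ae hb
    rw [Real.norm_eq_abs, sub_zero, abs_of_nonneg ht0] at this
    rw [h5]
    calc |∫ τ in (0:ℝ)..t, (ae ε τ - aet ε τ)| ≤ η * t := this
      _ = t * η := mul_comm _ _
  -- norm bounds on data
  have hxnorm : ‖u0e ε‖ ≤ C * ε ^ (-N:ℤ) :=
    le_trans (le_add_of_nonneg_right ENNReal.toReal_nonneg) (hu0mod ε hε)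
  have hAet_ub : Aet ≤ C * ε ^ (-N:ℤ) := hatmod ε hε
  have hηub : η ≤ CM2 * ε ^ (M + N) := hCM2 ε hε
  have hδub : (eLpNorm (fun x => qe ε x - qet ε x) ⊤ mu01).toReal ≤ CM1 * ε ^ (M + 2*N) :=
    hCM1 ε hε
  have hx0 : (0:ℝ) ≤ ‖u0e ε‖ := norm_nonneg _
  have hCN0 : (0:ℝ) ≤ C * ε ^ (-N:ℤ) := le_trans hx0 hxnorm
  -- weights
  set w1 : ℕ → ℝ := fun n => Real.exp (-(lam ε n * β)) with hw1def
  set w2 : ℕ → ℝ := fun n => Real.exp (-(lam ε n * βt)) with hw2def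
  set w3 : ℕ → ℝ := fun m => Real.exp (-(lamt ε m * βt)) with hw3def
  have hw1b : ∀ n, |w1 n| ≤ 1 := fun n => by
    rw [abs_of_pos (Real.exp_pos _)]
    exact Real.exp_le_one_iff.2 (neg_nonpos.2 (mul_nonneg (hlam ε hε n) hβ0))
  have hw2b : ∀ n, |w2 n| ≤ 1 := fun n => by
    rw [abs_of_pos (Real.exp_pos _)]
    exact Real.exp_le_one_iff.2 (neg_nonpos.2 (mul_nonneg (hlam ε hε n) hβt0))
  have hw3b : ∀ m, |w3 m| ≤ 1 := fun m => by
    rw [abs_of_pos (Real.exp_pos _)]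
    exact Real.exp_le_one_iff.2 (neg_nonpos.2 (mul_nonneg (hlamt ε hε m) hβt0))
  -- the four series
  set X : L2 := ∑' n, (w1 n * ⟪u0e ε, Φb ε n⟫) • Φb ε n with hXdef
  set Y : L2 := ∑' n, (w2 n * ⟪u0e ε, Φb ε n⟫) • Φb ε n with hYdef
  set Z : L2 := ∑' m, (w3 m * ⟪u0e ε, Φbt ε m⟫) • Φbt ε m with hZdef
  set W : L2 := ∑' m, (w3 m * ⟪u0et ε, Φbt ε m⟫) • Φbt ε m with hWdef
  -- powers of epsilon
  have hεN : (0:ℝ) < ε ^ N := pow_pos hε0 N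
  have hzp : (ε:ℝ) ^ (-N:ℤ) = (ε ^ N)⁻¹ := by
    rw [zpow_neg, zpow_natCast]
  have hxnorm' : ‖u0e ε‖ ≤ C * (ε ^ N)⁻¹ := by rwa [hzp] at hxnorm
  have hAet_ub' : Aet ≤ C * (ε ^ N)⁻¹ := by rwa [hzp] at hAet_ub
  have hCN0' : (0:ℝ) ≤ C * (ε ^ N)⁻¹ := le_trans hx0 hxnorm'
  -- term 1
  have hbound1 : ‖X - Y‖ ≤ C * CM2 / a₀ * ε ^ M := by
    have hwd : ∀ n, |w1 n - w2 n| ≤ CM2 * ε ^ (M + N) / a₀ := by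
      intro n
      refine (weight_diff_le (hlam ε hε n) ht0 ha₀ hη0 hβ_lb hβt_lb hdiff).trans ?_
      gcongr
    have hK0 : 0 ≤ CM2 * ε ^ (M + N) / a₀ := by positivity
    have h := wsum_wdiff_norm_le (Φb ε) w1 w2 hw1b hw2b hwd hK0 (u0e ε)
    refine le_trans h ?_
    calc CM2 * ε ^ (M + N) / a₀ * ‖u0e ε‖
        ≤ CM2 * ε ^ (M + N) / a₀ * (C * (ε ^ N)⁻¹) :=
          mul_le_mul_of_nonneg_left hxnorm' hK0
      _ = C * CM2 / a₀ * (ε ^ (M + N) * (ε ^ N)⁻¹) := by ring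
      _ = C * CM2 / a₀ * ε ^ M := by
          rw [pow_add, mul_assoc, mul_inv_cancel₀ (ne_of_gt hεN), mul_one]
  -- term 2
  have hbound2 : ‖Y - Z‖ ≤ T * C ^ 2 * CM1 * ε ^ M := by
    have h := semigroup_compare (hqe ε hε) (hqet ε hε) (Φb ε) (Φbt ε)
      (hlam ε hε) (hlamt ε hε) (hΦb ε hε) (hΦbt ε hε) hβt0 (u0e ε)
    refine le_trans h ?_
    set δq : ℝ := (eLpNorm (fun y => qe ε y - qet ε y) ⊤ mu01).toReal with hδqdef
    have hδq0 : 0 ≤ δq := ENNReal.toReal_nonneg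
    have hδub' : δq ≤ CM1 * ε ^ (M + 2*N) := hδub
    have hβt_ub2 : βt ≤ T * (C * (ε ^ N)⁻¹) :=
      hβt_ub.trans (mul_le_mul_of_nonneg_left hAet_ub' hT.le)
    have hstep : βt * δq * ‖u0e ε‖ ≤
        (T * (C * (ε ^ N)⁻¹)) * (CM1 * ε ^ (M + 2*N)) * (C * (ε ^ N)⁻¹) := by
      refine mul_le_mul (mul_le_mul hβt_ub2 hδub' hδq0 (by positivity)) hxnorm' hx0 ?_
      positivity
    refine hstep.trans (le_of_eq ?_)
    have hsplit : (ε:ℝ) ^ (M + 2*N) = ε ^ M * (ε ^ N * ε ^ N) := by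
      rw [show M + 2*N = M + (N + N) by ring, pow_add, pow_add]
    rw [hsplit]
    field_simp
  -- term 3
  have hbound3 : ‖Z - W‖ ≤ CM3 * ε ^ M := by
    have h := wsum_sub_norm_le (Φbt ε) w3 hw3b zero_le_one (u0e ε) (u0et ε)
    rw [one_mul] at h
    exact h.trans (hCM3 ε hε)
  -- triangle inequality
  have htri : ‖X - W‖ ≤ ‖X - Y‖ + ‖Y - Z‖ + ‖Z - W‖ := by
    have h1 : X - W = (X - Y) + (Y - Z) + (Z - W) := by abel
    rw [h1]
    exact (norm_add_le _ _).trans (add_le_add_left (norm_add_le _ _) _)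
  have hXW : ‖(∑' n, (Real.exp (-(lam ε n) * β) * ⟪u0e ε, Φb ε n⟫) • Φb ε n) -
      ∑' m, (Real.exp (-(lamt ε m) * βt) * ⟪u0et ε, Φbt ε m⟫) • Φbt ε m‖ = ‖X - W‖ := by
    congr 2
    · exact tsum_congr fun n => by simp only [hw1def]; rw [neg_mul]
    · exact tsum_congr fun m => by simp only [hw3def]; rw [neg_mul]
  rw [hXW]
  calc ‖X - W‖ ≤ ‖X - Y‖ + ‖Y - Z‖ + ‖Z - W‖ := htri
    _ ≤ C * CM2 / a₀ * ε ^ M + T * C ^ 2 * CM1 * ε ^ M + CM3 * ε ^ M :=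
        add_le_add (add_le_add hbound1 hbound2) hbound3
    _ = (T * C ^ 2 * CM1 + C * CM2 / a₀ + CM3) * ε ^ M := by ring

end
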